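/- arXiv:0905.0919 — 2 statements merged into one kernel-verified Lean document; each statement's English description precedes it below -/
import Mathlib

section
/- Let a₁, …, a_n : ℝⁿ → ℝ be smooth functions satisfying the Coulomb gauge condition ∑_j ∂a_j/∂x_j = 0. Let p(x, ξ) = (1/2)∑_j (ξ_j + a_j(x))² + V(x) with V smooth, and let f : ℝ → ℝ be smooth and compactly supported with p-sublevel sets compact on supp f. Then ∫∫ ∑_k (ξ_k + a_k(x)) (∂p/∂x_k)(x, ξ) f''(p(x, ξ)) dx dξ = 0. -/
open MeasureTheory

/-- Reflection of one coordinate kills the integral of an odd function. -/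
lemma refl_integral_zero {n : ℕ} (k : Fin n) (g : (Fin n → ℝ) → ℝ)
    (hodd : ∀ u : Fin n → ℝ, g (fun i => if i = k then -u i else u i) = - g u) :
    ∫ u : Fin n → ℝ, g u = 0 := by
  classical
  set e : ∀ _ : Fin n, ℝ ≃ᵐ ℝ :=
    fun i => if i = k then (MeasurableEquiv.neg ℝ) else (MeasurableEquiv.refl ℝ) with he
  set T : (Fin n → ℝ) ≃ᵐ (Fin n → ℝ) := MeasurableEquiv.piCongrRight e with hT
  have hTpres : MeasurePreserving T := by
    have h : ∀ i, MeasurePreserving (e i) (volume : Measure ℝ) volume := by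
      intro i
      by_cases hi : i = k
      · simp only [he, hi, if_pos rfl]
        exact Measure.measurePreserving_neg _
      · simp only [he, if_neg hi]
        exact MeasurePreserving.id _
    exact volume_preserving_pi h
  have h1 : ∫ u, g (T u) = ∫ u, g u :=
    hTpres.integral_comp T.measurableEmbedding g
  have h2 : ∀ u : Fin n → ℝ, g (T u) = - g u := by
    intro u
    have hTu : T u = fun i => if i = k then -u i else u i := by
      funext i
      by_cases hi : i = k <;>
        simp [hT, he, MeasurableEquiv.piCongrRight, Equiv.piCongrRight, hi]
    rw [hTu, hodd]
  have h3 : ∫ u, g (T u) = - ∫ u, g u := by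
    simp_rw [h2]; exact integral_neg g
  have := h1.symm.trans h3
  linarith

/-- Coordinate permutation preserves integrals on `Fin n → ℝ`. -/
lemma perm_integral {n : ℕ} (σ : Equiv.Perm (Fin n)) (g : (Fin n → ℝ) → ℝ) :
    ∫ u : Fin n → ℝ, g (fun i => u (σ i)) = ∫ u : Fin n → ℝ, g u := by
  set T : (Fin n → ℝ) ≃ᵐ (Fin n → ℝ) :=
    MeasurableEquiv.piCongrLeft (fun _ => ℝ) σ.symm with hT
  have hTpres : MeasurePreserving T :=
    volume_measurePreserving_piCongrLeft _ σ.symm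
  have hTu : ∀ (u : Fin n → ℝ) (i : Fin n), T u i = u (σ i) := by
    intro u i
    have := MeasurableEquiv.piCongrLeft_apply_apply (β := fun _ => ℝ) σ.symm u (σ i)
    simpa using this
  have h1 : ∫ u, g (T u) = ∫ u, g u :=
    hTpres.integral_comp T.measurableEmbedding g
  have h2 : ∀ u : Fin n → ℝ, g (T u) = g (fun i => u (σ i)) := by
    intro u; congr 1; funext i; exact hTu u i
  rw [← h1]; simp_rw [h2]

lemma aux_fderiv {n : ℕ} (A : Fin n → (Fin n → ℝ) → ℝ) (V : (Fin n → ℝ) → ℝ)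
    (hA : ∀ j, ContDiff ℝ (⊤ : ℕ∞) (A j)) (hV : ContDiff ℝ (⊤ : ℕ∞) V)
    (ξ x₀ v : Fin n → ℝ) :
    fderiv ℝ (fun x => (1 / 2 : ℝ) * ∑ j, (ξ j + A j x) ^ 2 + V x) x₀ v
      = (∑ j, (ξ j + A j x₀) * fderiv ℝ (A j) x₀ v) + fderiv ℝ V x₀ v := by
  have hAj : ∀ j : Fin n, HasFDerivAt (fun x => (ξ j + A j x) ^ 2)
      ((2 * (ξ j + A j x₀)) • fderiv ℝ (A j) x₀) x₀ := by
    intro j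
    have h := ((hA j).differentiable (by simp) x₀).hasFDerivAt
    have h2 : HasFDerivAt (fun x => ξ j + A j x) (fderiv ℝ (A j) x₀) x₀ :=
      h.const_add (ξ j)
    have h3 := h2.fun_mul h2
    have : (fun x => (ξ j + A j x) ^ 2) = fun x => (ξ j + A j x) * (ξ j + A j x) := by
      funext x; ring
    rw [this]
    refine h3.congr_fderiv ?_
    ext w
    simp
    ring
  have hsum : HasFDerivAt (fun x => ∑ j, (ξ j + A j x) ^ 2)
      (∑ j, (2 * (ξ j + A j x₀)) • fderiv ℝ (A j) x₀) x₀ :=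
    HasFDerivAt.fun_sum (fun j _ => hAj j)
  have hmul := hsum.const_mul (1 / 2 : ℝ)
  have hall := hmul.fun_add ((hV.differentiable (by simp) x₀).hasFDerivAt)
  rw [hall.fderiv]
  simp only [ContinuousLinearMap.add_apply, ContinuousLinearMap.smul_apply,
    ContinuousLinearMap.coe_sum', Finset.sum_apply, smul_eq_mul]
  rw [Finset.mul_sum]
  congr 1
  apply Finset.sum_congr rfl
  intro j _
  ring

lemma key_cpt {n : ℕ} (g : ℝ → ℝ) (hg : HasCompactSupport g) (c : ℝ)
    (φ : (Fin n → ℝ) → ℝ) :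
    HasCompactSupport fun u : Fin n → ℝ => φ u * g ((1 / 2 : ℝ) * ∑ i, u i ^ 2 + c) := by
  obtain ⟨M, hM0, hM⟩ : ∃ M, 0 ≤ M ∧ tsupport g ⊆ Metric.closedBall 0 M := by
    obtain ⟨M, hM⟩ := hg.isCompact.isBounded.subset_closedBall 0
    exact ⟨max M 0, le_max_right _ _, hM.trans (Metric.closedBall_subset_closedBall (le_max_left _ _))⟩
  set R : ℝ := Real.sqrt (2 * (M + |c|)) with hR
  apply HasCompactSupport.intro (isCompact_closedBall (0 : Fin n → ℝ) R)
  intro u hu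
  rcases eq_or_ne (g ((1 / 2 : ℝ) * ∑ i, u i ^ 2 + c)) 0 with h | h
  · rw [h, mul_zero]
  · exfalso
    apply hu
    have hmem : (1 / 2 : ℝ) * ∑ i, u i ^ 2 + c ∈ tsupport g :=
      subset_tsupport g h
    have hb := hM hmem
    rw [Metric.mem_closedBall, Real.dist_eq, sub_zero] at hb
    have hsum : ∑ i, u i ^ 2 ≤ 2 * (M + |c|) := by
      have := abs_le.mp hb
      have hc := neg_abs_le c
      nlinarith [abs_nonneg c]
    rw [Metric.mem_closedBall, dist_zero_right]
    have hnonneg : (0:ℝ) ≤ R := Real.sqrt_nonneg _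
    rw [pi_norm_le_iff_of_nonneg hnonneg]
    intro i
    have h1 : u i ^ 2 ≤ ∑ j, u j ^ 2 :=
      Finset.single_le_sum (f := fun j => u j ^ 2) (fun j _ => sq_nonneg _) (Finset.mem_univ i)
    have h2 : u i ^ 2 ≤ 2 * (M + |c|) := h1.trans hsum
    have : |u i| ≤ R := by
      rw [hR]
      rw [show |u i| = Real.sqrt (u i ^ 2) by rw [Real.sqrt_sq_eq_abs]]
      exact Real.sqrt_le_sqrt h2
    simpa [Real.norm_eq_abs] using this


lemma inner_zero {n : ℕ} (g : ℝ → ℝ) (hgc : Continuous g) (hgs : HasCompactSupport g)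
    (c : Fin n → Fin n → ℝ) (v : Fin n → ℝ) (W : ℝ) (hc : ∑ k, c k k = 0) :
    ∫ u : Fin n → ℝ,
      (∑ k, u k * ((∑ j, u j * c j k) + v k)) * g ((1 / 2 : ℝ) * ∑ j, u j ^ 2 + W) = 0 := by
  classical
  rcases Nat.eq_zero_or_pos n with hn | hn
  · subst hn; simp
  set k₀ : Fin n := ⟨0, hn⟩ with hk₀
  set E : (Fin n → ℝ) → ℝ := fun u => (1 / 2 : ℝ) * ∑ j, u j ^ 2 + W with hE
  have hEc : Continuous E := by
    apply Continuous.add _ continuous_const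
    exact continuous_const.mul (continuous_finset_sum _ fun j _ => (continuous_apply j).pow 2)
  have hint2 : ∀ j k : Fin n, Integrable fun u : Fin n → ℝ => (u j * u k) * g (E u) := by
    intro j k
    apply Continuous.integrable_of_hasCompactSupport
    · exact ((continuous_apply j).mul (continuous_apply k)).mul (hgc.comp hEc)
    · exact key_cpt g hgs W _
  have hint1 : ∀ k : Fin n, Integrable fun u : Fin n → ℝ => u k * g (E u) := by
    intro k
    apply Continuous.integrable_of_hasCompactSupport
    · exact (continuous_apply k).mul (hgc.comp hEc)
    · exact key_cpt g hgs W _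
  have hEflip : ∀ (k : Fin n) (u : Fin n → ℝ),
      E (fun i => if i = k then -u i else u i) = E u := by
    intro k u
    simp only [hE]
    congr 2
    apply Finset.sum_congr rfl
    intro j _
    split <;> ring
  have hI1 : ∀ k : Fin n, ∫ u : Fin n → ℝ, u k * g (E u) = 0 := by
    intro k
    apply refl_integral_zero k (fun u => u k * g (E u))
    intro u
    rw [hEflip k u]
    simp
  have hI2off : ∀ j k : Fin n, j ≠ k → ∫ u : Fin n → ℝ, (u j * u k) * g (E u) = 0 := by
    intro j k hjk
    apply refl_integral_zero k (fun u => (u j * u k) * g (E u))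
    intro u
    rw [hEflip k u]
    simp [if_neg hjk]
  have hI2diag : ∀ k : Fin n,
      (∫ u : Fin n → ℝ, (u k * u k) * g (E u)) = ∫ u : Fin n → ℝ, (u k₀ * u k₀) * g (E u) := by
    intro k
    have h := perm_integral (Equiv.swap k k₀) (fun u => (u k₀ * u k₀) * g (E u))
    have heq : ∀ u : Fin n → ℝ,
        ((fun i => u ((Equiv.swap k k₀) i)) k₀ * (fun i => u ((Equiv.swap k k₀) i)) k₀)
            * g (E fun i => u ((Equiv.swap k k₀) i)) = (u k * u k) * g (E u) := by
      intro u
      have h1 : (Equiv.swap k k₀) k₀ = k := Equiv.swap_apply_right k k₀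
      have h2 : E (fun i => u ((Equiv.swap k k₀) i)) = E u := by
        simp only [hE]
        congr 2
        exact Equiv.sum_comp (Equiv.swap k k₀) (fun i => u i ^ 2)
      simp only [h1, h2]
    calc (∫ u : Fin n → ℝ, (u k * u k) * g (E u))
        = ∫ u : Fin n → ℝ,
            ((fun i => u ((Equiv.swap k k₀) i)) k₀ * (fun i => u ((Equiv.swap k k₀) i)) k₀)
              * g (E fun i => u ((Equiv.swap k k₀) i)) := by
          congr 1; funext u; exact (heq u).symm
      _ = ∫ u : Fin n → ℝ, (u k₀ * u k₀) * g (E u) := h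
  have hHrw : ∀ u : Fin n → ℝ,
      (∑ k, u k * ((∑ j, u j * c j k) + v k)) * g (E u)
        = ∑ k, ((∑ j, c j k * ((u k * u j) * g (E u))) + v k * (u k * g (E u))) := by
    intro u
    rw [Finset.sum_mul]
    apply Finset.sum_congr rfl
    intro k _
    rw [mul_add, add_mul]
    congr 1
    · rw [Finset.mul_sum, Finset.sum_mul]
      apply Finset.sum_congr rfl
      intro j _
      ring
    · ring
  have hintk : ∀ k : Fin n, Integrable (fun u : Fin n → ℝ =>
      (∑ j, c j k * ((u k * u j) * g (E u))) + v k * (u k * g (E u))) := by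
    intro k
    apply Integrable.add
    · apply integrable_finset_sum
      intro j _
      exact (hint2 k j).const_mul _
    · exact (hint1 k).const_mul _
  calc (∫ u : Fin n → ℝ, (∑ k, u k * ((∑ j, u j * c j k) + v k)) * g (E u))
      = ∫ u : Fin n → ℝ,
          ∑ k, ((∑ j, c j k * ((u k * u j) * g (E u))) + v k * (u k * g (E u))) := by
        congr 1; funext u; exact hHrw u
    _ = ∑ k, ∫ u : Fin n → ℝ,
          ((∑ j, c j k * ((u k * u j) * g (E u))) + v k * (u k * g (E u))) :=
        integral_finset_sum _ (fun k _ => hintk k)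
    _ = ∑ k, ((∑ j, c j k * ∫ u : Fin n → ℝ, (u k * u j) * g (E u))
          + v k * ∫ u : Fin n → ℝ, u k * g (E u)) := by
        apply Finset.sum_congr rfl
        intro k _
        rw [integral_add (integrable_finset_sum _ fun j _ => (hint2 k j).const_mul _)
          ((hint1 k).const_mul _), integral_finset_sum _ (fun j _ => (hint2 k j).const_mul _),
          integral_const_mul _ _]
        congr 1
        apply Finset.sum_congr rfl
        intro j _
        rw [integral_const_mul _ _]
    _ = ∑ k, c k k * ∫ u : Fin n → ℝ, (u k₀ * u k₀) * g (E u) := by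
        apply Finset.sum_congr rfl
        intro k _
        rw [hI1 k, mul_zero, add_zero]
        rw [Finset.sum_eq_single k]
        · rw [hI2diag k]
        · intro j _ hj
          rw [hI2off k j (Ne.symm hj), mul_zero]
        · intro h
          exact absurd (Finset.mem_univ k) h
    _ = (∑ k, c k k) * ∫ u : Fin n → ℝ, (u k₀ * u k₀) * g (E u) := (Finset.sum_mul _ _ _).symm
    _ = 0 := by rw [hc, zero_mul]

/-- In the Coulomb gauge, the first magnetic correction vanishes:
`∫∫ ∑_k (ξ_k + a_k(x)) (∂p/∂x_k) f''(p) dx dξ = 0` for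
`p(x,ξ) = (1/2)∑_j (ξ_j + a_j(x))² + V(x)`. -/
theorem stmt10 (n : ℕ) (A : Fin n → (Fin n → ℝ) → ℝ) (V : (Fin n → ℝ) → ℝ)
    (hA : ∀ j, ContDiff ℝ (⊤ : ℕ∞) (A j)) (hV : ContDiff ℝ (⊤ : ℕ∞) V)
    (hCoulomb : ∀ x : Fin n → ℝ, ∑ j, fderiv ℝ (A j) x (Pi.single j 1) = 0)
    (p : (Fin n → ℝ) × (Fin n → ℝ) → ℝ)
    (hp : ∀ q : (Fin n → ℝ) × (Fin n → ℝ),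
      p q = (1 / 2) * ∑ j, (q.2 j + A j q.1) ^ 2 + V q.1)
    (f : ℝ → ℝ) (hf : ContDiff ℝ (⊤ : ℕ∞) f) (hfsupp : HasCompactSupport f)
    (hcpt : IsCompact (p ⁻¹' tsupport f)) :
    ∫ q : (Fin n → ℝ) × (Fin n → ℝ),
        (∑ k, (q.2 k + A k q.1) * fderiv ℝ (fun x => p (x, q.2)) q.1 (Pi.single k 1))
          * deriv (deriv f) (p q) = 0 := by
  classical
  set g : ℝ → ℝ := deriv (deriv f) with hg
  have hfi : ContDiff ℝ (⊤ : ℕ∞) f := hf.of_le (by simp)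
  have hf1 : ContDiff ℝ (⊤ : ℕ∞) (deriv f) := (contDiff_infty_iff_deriv.mp hfi).2
  have hgc : Continuous g := (contDiff_infty_iff_deriv.mp hf1).2.continuous
  have hgs : HasCompactSupport g := hfsupp.deriv.deriv
  -- explicit formula for the x-derivative of p
  have hfd : ∀ (x ξ : Fin n → ℝ) (k : Fin n),
      fderiv ℝ (fun x' => p (x', ξ)) x (Pi.single k 1)
        = (∑ j, (ξ j + A j x) * fderiv ℝ (A j) x (Pi.single k 1))
            + fderiv ℝ V x (Pi.single k 1) := by
    intro x ξ k
    have h1 : (fun x' => p (x', ξ))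
        = fun x' => (1 / 2 : ℝ) * ∑ j, (ξ j + A j x') ^ 2 + V x' :=
      funext fun x' => hp (x', ξ)
    rw [h1]
    exact aux_fderiv A V hA hV ξ x (Pi.single k 1)
  -- the explicit integrand
  set F : (Fin n → ℝ) × (Fin n → ℝ) → ℝ := fun q =>
    (∑ k, (q.2 k + A k q.1) *
      ((∑ j, (q.2 j + A j q.1) * fderiv ℝ (A j) q.1 (Pi.single k 1))
        + fderiv ℝ V q.1 (Pi.single k 1))) * g (p q) with hF
  have hFeq : (fun q : (Fin n → ℝ) × (Fin n → ℝ) =>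
      (∑ k, (q.2 k + A k q.1) * fderiv ℝ (fun x => p (x, q.2)) q.1 (Pi.single k 1))
        * g (p q)) = F := by
    funext q
    simp only [hF]
    congr 1
    apply Finset.sum_congr rfl
    intro k _
    rw [hfd q.1 q.2 k]
  rw [hFeq]
  -- continuity facts
  have hcA : ∀ j k : Fin n, Continuous fun x : Fin n → ℝ => fderiv ℝ (A j) x (Pi.single k 1) :=
    fun j k => ((hA j).continuous_fderiv (by simp)).clm_apply continuous_const
  have hcV : ∀ k : Fin n, Continuous fun x : Fin n → ℝ => fderiv ℝ V x (Pi.single k 1) :=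
    fun k => (hV.continuous_fderiv (by simp)).clm_apply continuous_const
  have hc1 : ∀ k : Fin n,
      Continuous fun q : (Fin n → ℝ) × (Fin n → ℝ) => q.2 k + A k q.1 :=
    fun k => ((continuous_apply k).comp continuous_snd).add ((hA k).continuous.comp continuous_fst)
  have hpc : Continuous p := by
    have h1 : p = fun q : (Fin n → ℝ) × (Fin n → ℝ) =>
        (1 / 2 : ℝ) * ∑ j, (q.2 j + A j q.1) ^ 2 + V q.1 := funext hp
    rw [h1]
    exact (continuous_const.mul (continuous_finset_sum _ fun j _ => (hc1 j).pow 2)).add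
      (hV.continuous.comp continuous_fst)
  have hFc : Continuous F := by
    apply Continuous.mul _ (hgc.comp hpc)
    apply continuous_finset_sum
    intro k _
    exact (hc1 k).mul ((continuous_finset_sum _ fun j _ =>
      (hc1 j).mul ((hcA j k).comp continuous_fst)).add ((hcV k).comp continuous_fst))
  -- compact support of F
  have hsupp1 : Function.support F ⊆ p ⁻¹' tsupport f := by
    intro q hq
    have h1 : g (p q) ≠ 0 := by
      intro h
      exact hq (by simp only [hF, h, mul_zero])
    have h2 : p q ∈ Function.support g := h1
    have h3 : Function.support g ⊆ tsupport f := by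
      refine (support_deriv_subset).trans ?_
      exact closure_minimal support_deriv_subset (isClosed_tsupport f)
    exact h3 h2
  have hclosed : IsClosed (p ⁻¹' tsupport f) := (isClosed_tsupport f).preimage hpc
  have hFs : HasCompactSupport F :=
    IsCompact.of_isClosed_subset hcpt (isClosed_tsupport F) (closure_minimal hsupp1 hclosed)
  have hFi : Integrable F := hFc.integrable_of_hasCompactSupport hFs
  -- Fubini
  rw [Measure.volume_eq_prod] at hFi ⊢
  rw [integral_prod F hFi]
  -- the inner integral vanishes for every x
  have hinner : ∀ x : Fin n → ℝ, (∫ ξ : Fin n → ℝ, F (x, ξ)) = 0 := by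
    intro x
    set a : Fin n → ℝ := fun k => A k x with ha
    set c : Fin n → Fin n → ℝ := fun j k => fderiv ℝ (A j) x (Pi.single k 1) with hcdef
    set v : Fin n → ℝ := fun k => fderiv ℝ V x (Pi.single k 1) with hv
    set W : ℝ := V x with hW
    set H : (Fin n → ℝ) → ℝ := fun u =>
      (∑ k, u k * ((∑ j, u j * c j k) + v k)) * g ((1 / 2 : ℝ) * ∑ j, u j ^ 2 + W) with hH
    have hFH : ∀ ξ : Fin n → ℝ, F (x, ξ) = H (ξ + a) := by
      intro ξ
      simp only [hF, hH, hp (x, ξ), Pi.add_apply, ha, hcdef, hv, hW]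
    calc (∫ ξ : Fin n → ℝ, F (x, ξ)) = ∫ ξ : Fin n → ℝ, H (ξ + a) := by
          congr 1; funext ξ; exact hFH ξ
      _ = ∫ u : Fin n → ℝ, H u := integral_add_right_eq_self H a
      _ = 0 := by
          apply inner_zero g hgc hgs c v W
          have h := hCoulomb x
          simpa [hcdef] using h
  simp_rw [hinner]
  exact integral_zero _ _
end

section
/- Let V be smooth one-dimensional potential and f : ℝ → ℝ smooth, compactly supported in (−∞, a) with V⁻¹((−∞,a]) compact. Then ∫∫_{ℝ²} [ −(1/4) V''(x) f''(E) − (1/6) V'(x)² f'''(E) − (1/6) ξ² V''(x) f'''(E) − (1/8) ξ² V'(x)² f''''(E) ] dx dξ = (1/24) ∫∫_{ℝ²} V'(x)² f'''(E) dx dξ, where E = ξ²/2 + V(x). -/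
open MeasureTheory

section Aux

variable (a : ℝ) (V f : ℝ → ℝ)
    (hV : ContDiff ℝ (⊤ : ℕ∞) V) (hf : ContDiff ℝ (⊤ : ℕ∞) f) (hfsupp : HasCompactSupport f)
    (hfa : tsupport f ⊆ Set.Iio a) (hVa : IsCompact (V ⁻¹' Set.Iic a))

theorem aux_contDiff (hf : ContDiff ℝ (⊤ : ℕ∞) f) (k : ℕ) : ContDiff ℝ (⊤ : ℕ∞) (iteratedDeriv k f) := by
  rw [iteratedDeriv_eq_iterate]
  exact ContDiff.iterate_deriv k (hf.of_le (by simp))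

theorem aux_tsupport (k : ℕ) : tsupport (iteratedDeriv k f) ⊆ tsupport f := by
  induction k with
  | zero => simp [iteratedDeriv_zero]
  | succ n ih =>
      rw [iteratedDeriv_succ]
      exact (closure_minimal support_deriv_subset (isClosed_tsupport _)).trans ih

include hV hfa hVa in
theorem aux_compactS :
    IsCompact {p : ℝ × ℝ | p.2 ^ 2 / 2 + V p.1 ∈ tsupport f} := by
  rcases Set.eq_empty_or_nonempty (V ⁻¹' Set.Iic a) with hK | ⟨x₀, hx₀⟩
  · convert isCompact_empty
    ext p
    simp only [Set.mem_setOf_eq, Set.mem_empty_iff_false, iff_false]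
    intro hp
    have h1 : p.2 ^ 2 / 2 + V p.1 < a := hfa hp
    have : V p.1 ≤ a := by nlinarith [sq_nonneg p.2]
    exact Set.eq_empty_iff_forall_notMem.mp hK p.1 this
  · obtain ⟨y₀, hy₀, hmin⟩ := hVa.exists_isMinOn ⟨x₀, hx₀⟩ (hV.continuous.continuousOn)
    set m := V y₀ with hm
    set c := Real.sqrt (2 * (a - m)) with hc
    apply IsCompact.of_isClosed_subset ((hVa.prod isCompact_Icc :
        IsCompact ((V ⁻¹' Set.Iic a) ×ˢ Set.Icc (-c) c)))
    · exact isClosed_tsupport f |>.preimage (((continuous_snd.pow 2).div_const 2).add (hV.continuous.comp continuous_fst))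
    · rintro ⟨x, ξ⟩ hp
      have h1 : ξ ^ 2 / 2 + V x < a := hfa hp
      have hVx : V x ≤ a := by nlinarith [sq_nonneg ξ]
      have hmx : m ≤ V x := hmin hVx
      have hsq : ξ ^ 2 ≤ 2 * (a - m) := by nlinarith
      have habs : |ξ| ≤ c := by
        rw [hc, ← Real.sqrt_sq_eq_abs]
        exact Real.sqrt_le_sqrt hsq
      exact ⟨hVx, abs_le.mp habs⟩

include hV hf hfa hVa in
theorem aux_int2 (W : ℝ × ℝ → ℝ) (hW : Continuous W) (k : ℕ) :
    Integrable (fun p : ℝ × ℝ => W p * iteratedDeriv k f (p.2 ^ 2 / 2 + V p.1)) := by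
  apply Continuous.integrable_of_hasCompactSupport
  · exact hW.mul (((aux_contDiff f hf k).continuous).comp (((continuous_snd.pow 2).div_const 2).add (hV.continuous.comp continuous_fst)))
  · apply HasCompactSupport.intro (aux_compactS a V f hV hfa hVa)
    intro p hp
    have : iteratedDeriv k f (p.2 ^ 2 / 2 + V p.1) = 0 := by
      apply image_eq_zero_of_notMem_tsupport
      exact fun h => hp (aux_tsupport f k h)
    simp [this]

include hV hf hfa hVa in
theorem aux_intx (ξ : ℝ) (W : ℝ → ℝ) (hW : Continuous W) (k : ℕ) :
    Integrable (fun x : ℝ => W x * iteratedDeriv k f (ξ ^ 2 / 2 + V x)) := by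
  apply Continuous.integrable_of_hasCompactSupport
  · exact hW.mul (((aux_contDiff f hf k).continuous).comp (continuous_const.add hV.continuous))
  · apply HasCompactSupport.intro (K := {x : ℝ | ξ ^ 2 / 2 + V x ∈ tsupport f})
    · apply IsCompact.of_isClosed_subset hVa
      · exact isClosed_tsupport f |>.preimage (continuous_const.add hV.continuous)
      · intro x hx
        have h1 : ξ ^ 2 / 2 + V x < a := hfa hx
        have : V x ≤ a := by nlinarith [sq_nonneg ξ]
        exact this
    · intro x hx
      have : iteratedDeriv k f (ξ ^ 2 / 2 + V x) = 0 := by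
        apply image_eq_zero_of_notMem_tsupport
        exact fun h => hx (aux_tsupport f k h)
      simp [this]

include hf hfa in
theorem aux_intxi (x : ℝ) (W : ℝ → ℝ) (hW : Continuous W) (hVc : Continuous V) (k : ℕ) :
    Integrable (fun ξ : ℝ => W ξ * iteratedDeriv k f (ξ ^ 2 / 2 + V x)) := by
  apply Continuous.integrable_of_hasCompactSupport
  · exact hW.mul (((aux_contDiff f hf k).continuous).comp (((continuous_pow 2).div_const 2).add continuous_const))
  · set c := Real.sqrt (2 * (a - V x)) with hc
    apply HasCompactSupport.intro (K := {ξ : ℝ | ξ ^ 2 / 2 + V x ∈ tsupport f})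
    · apply IsCompact.of_isClosed_subset (isCompact_Icc (a := -c) (b := c))
      · exact isClosed_tsupport f |>.preimage (((continuous_pow 2).div_const 2).add continuous_const)
      · intro ξ hξ
        have h1 : ξ ^ 2 / 2 + V x < a := hfa hξ
        have hsq : ξ ^ 2 ≤ 2 * (a - V x) := by nlinarith
        have habs : |ξ| ≤ c := by
          rw [hc, ← Real.sqrt_sq_eq_abs]
          exact Real.sqrt_le_sqrt hsq
        exact abs_le.mp habs
    · intro ξ hξ
      have : iteratedDeriv k f (ξ ^ 2 / 2 + V x) = 0 := by
        apply image_eq_zero_of_notMem_tsupport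
        exact fun h => hξ (aux_tsupport f k h)
      simp [this]

include hV hf hfa hVa in
theorem aux_zero_x (A : ℝ → ℝ) (hA : ContDiff ℝ (⊤ : ℕ∞) A) (k : ℕ) :
    ∫ p : ℝ × ℝ, (deriv A p.1 * iteratedDeriv k f (p.2 ^ 2 / 2 + V p.1)
        + A p.1 * deriv V p.1 * iteratedDeriv (k + 1) f (p.2 ^ 2 / 2 + V p.1)) = 0 := by
  have hA' : Continuous (deriv A) := hA.continuous_deriv (by exact_mod_cast le_top)
  have hV' : Continuous (deriv V) := hV.continuous_deriv (by exact_mod_cast le_top)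
  have hint : Integrable (fun p : ℝ × ℝ => deriv A p.1 * iteratedDeriv k f (p.2 ^ 2 / 2 + V p.1)
        + A p.1 * deriv V p.1 * iteratedDeriv (k + 1) f (p.2 ^ 2 / 2 + V p.1)) :=
    (aux_int2 a V f hV hf hfa hVa _ (hA'.comp continuous_fst) k).add
      (aux_int2 a V f hV hf hfa hVa _ ((hA.continuous.comp continuous_fst).mul
        (hV'.comp continuous_fst)) (k + 1))
  rw [Measure.volume_eq_prod] at hint ⊢
  rw [integral_prod_symm _ hint]
  have key : ∀ ξ : ℝ, (∫ x : ℝ, (deriv A x * iteratedDeriv k f (ξ ^ 2 / 2 + V x)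
      + A x * deriv V x * iteratedDeriv (k + 1) f (ξ ^ 2 / 2 + V x))) = 0 := by
    intro ξ
    apply integral_eq_zero_of_hasDerivAt_of_integrable
      (f := fun x => A x * iteratedDeriv k f (ξ ^ 2 / 2 + V x))
    · intro x
      have h1 : HasDerivAt (fun x => ξ ^ 2 / 2 + V x) (deriv V x) x :=
        ((hV.differentiable (by simp) x).hasDerivAt).const_add _
      have h2 : HasDerivAt (iteratedDeriv k f)
          (iteratedDeriv (k + 1) f (ξ ^ 2 / 2 + V x)) (ξ ^ 2 / 2 + V x) := by
        rw [iteratedDeriv_succ]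
        exact ((aux_contDiff f hf k).differentiable (by simp) _).hasDerivAt
      have h3 := ((hA.differentiable (by simp) x).hasDerivAt).fun_mul (h2.comp x h1)
      refine h3.congr_deriv ?_
      simp only [Function.comp_apply, Function.comp_def, id_eq]
      ring
    · exact (aux_intx a V f hV hf hfa hVa ξ _ hA' k).add
        (aux_intx a V f hV hf hfa hVa ξ _ (hA.continuous.mul hV') (k + 1))
    · exact aux_intx a V f hV hf hfa hVa ξ _ hA.continuous k
  simp only [key, integral_zero]

include hV hf hfa hVa in
theorem aux_zero_xi (A : ℝ → ℝ) (hA : Continuous A) (k : ℕ) :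
    ∫ p : ℝ × ℝ, (A p.1 * iteratedDeriv k f (p.2 ^ 2 / 2 + V p.1)
        + p.2 ^ 2 * A p.1 * iteratedDeriv (k + 1) f (p.2 ^ 2 / 2 + V p.1)) = 0 := by
  have hint : Integrable (fun p : ℝ × ℝ => A p.1 * iteratedDeriv k f (p.2 ^ 2 / 2 + V p.1)
        + p.2 ^ 2 * A p.1 * iteratedDeriv (k + 1) f (p.2 ^ 2 / 2 + V p.1)) :=
    (aux_int2 a V f hV hf hfa hVa _ (hA.comp continuous_fst) k).add
      (aux_int2 a V f hV hf hfa hVa _ (((continuous_snd.pow 2)).mul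
        (hA.comp continuous_fst)) (k + 1))
  rw [Measure.volume_eq_prod] at hint ⊢
  rw [integral_prod _ hint]
  have key : ∀ x : ℝ, (∫ ξ : ℝ, (A x * iteratedDeriv k f (ξ ^ 2 / 2 + V x)
      + ξ ^ 2 * A x * iteratedDeriv (k + 1) f (ξ ^ 2 / 2 + V x))) = 0 := by
    intro x
    apply integral_eq_zero_of_hasDerivAt_of_integrable
      (f := fun ξ => ξ * A x * iteratedDeriv k f (ξ ^ 2 / 2 + V x))
    · intro ξ
      have h1 : HasDerivAt (fun ξ : ℝ => ξ ^ 2 / 2 + V x) ξ ξ := by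
        have := ((hasDerivAt_pow 2 ξ).div_const 2).add_const (V x)
        refine this.congr_deriv ?_
        norm_num
      have h2 : HasDerivAt (iteratedDeriv k f)
          (iteratedDeriv (k + 1) f (ξ ^ 2 / 2 + V x)) (ξ ^ 2 / 2 + V x) := by
        rw [iteratedDeriv_succ]
        exact ((aux_contDiff f hf k).differentiable (by simp) _).hasDerivAt
      have h3 := ((hasDerivAt_id ξ).mul_const (A x)).fun_mul (h2.comp ξ h1)
      refine h3.congr_deriv ?_
      simp only [Function.comp_apply, Function.comp_def, id_eq]
      ring
    · exact (aux_intxi a V f hf hfa x _ (continuous_const (y := A x)) hV.continuous k).add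
        (aux_intxi a V f hf hfa x _ ((continuous_pow 2).mul continuous_const) hV.continuous (k + 1))
    · exact aux_intxi a V f hf hfa x _ (continuous_id.mul continuous_const) hV.continuous k
  simp only [key, integral_zero]

end Aux

/-- Simplification of the second trace invariant in dimension one:
`∫∫ [−(1/4)V''f'' − (1/6)V'²f''' − (1/6)ξ²V''f''' − (1/8)ξ²V'²f''''] dx dξ
  = (1/24) ∫∫ V'² f''' dx dξ`, where `E = ξ²/2 + V(x)`. -/
theorem stmt18 (a : ℝ) (V f : ℝ → ℝ)
    (hV : ContDiff ℝ (⊤ : ℕ∞) V) (hf : ContDiff ℝ (⊤ : ℕ∞) f) (hfsupp : HasCompactSupport f)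
    (hfa : tsupport f ⊆ Set.Iio a) (hVa : IsCompact (V ⁻¹' Set.Iic a)) :
    ∫ p : ℝ × ℝ,
        (-(1 / 4) * deriv (deriv V) p.1 * iteratedDeriv 2 f (p.2 ^ 2 / 2 + V p.1)
          - (1 / 6) * (deriv V p.1) ^ 2 * iteratedDeriv 3 f (p.2 ^ 2 / 2 + V p.1)
          - (1 / 6) * p.2 ^ 2 * deriv (deriv V) p.1 * iteratedDeriv 3 f (p.2 ^ 2 / 2 + V p.1)
          - (1 / 8) * p.2 ^ 2 * (deriv V p.1) ^ 2 * iteratedDeriv 4 f (p.2 ^ 2 / 2 + V p.1))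
      = (1 / 24) *
        ∫ p : ℝ × ℝ, (deriv V p.1) ^ 2 * iteratedDeriv 3 f (p.2 ^ 2 / 2 + V p.1) := by
  have hV' : Continuous (deriv V) := hV.continuous_deriv (by exact_mod_cast le_top)
  have hVd : ContDiff ℝ (⊤ : ℕ∞) (deriv V) := (contDiff_infty_iff_deriv.mp (hV.of_le (by simp))).2
  have hV'' : Continuous (deriv (deriv V)) := hVd.continuous_deriv (by exact_mod_cast le_top)
  have hI1 : Integrable (fun p : ℝ × ℝ =>
      deriv (deriv V) p.1 * iteratedDeriv 2 f (p.2 ^ 2 / 2 + V p.1)) :=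
    aux_int2 a V f hV hf hfa hVa _ (hV''.comp continuous_fst) 2
  have hI2 : Integrable (fun p : ℝ × ℝ =>
      (deriv V p.1) ^ 2 * iteratedDeriv 3 f (p.2 ^ 2 / 2 + V p.1)) :=
    aux_int2 a V f hV hf hfa hVa _ ((hV'.comp continuous_fst).pow 2) 3
  have hI3 : Integrable (fun p : ℝ × ℝ =>
      p.2 ^ 2 * deriv (deriv V) p.1 * iteratedDeriv 3 f (p.2 ^ 2 / 2 + V p.1)) :=
    aux_int2 a V f hV hf hfa hVa _ ((continuous_snd.pow 2).mul (hV''.comp continuous_fst)) 3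
  have hI4 : Integrable (fun p : ℝ × ℝ =>
      p.2 ^ 2 * (deriv V p.1) ^ 2 * iteratedDeriv 4 f (p.2 ^ 2 / 2 + V p.1)) :=
    aux_int2 a V f hV hf hfa hVa _
      ((continuous_snd.pow 2).mul ((hV'.comp continuous_fst).pow 2)) 4
  set I1 := ∫ p : ℝ × ℝ, deriv (deriv V) p.1 * iteratedDeriv 2 f (p.2 ^ 2 / 2 + V p.1) with hI1d
  set I2 := ∫ p : ℝ × ℝ, (deriv V p.1) ^ 2 * iteratedDeriv 3 f (p.2 ^ 2 / 2 + V p.1) with hI2d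
  set I3 := ∫ p : ℝ × ℝ,
      p.2 ^ 2 * deriv (deriv V) p.1 * iteratedDeriv 3 f (p.2 ^ 2 / 2 + V p.1) with hI3d
  set I4 := ∫ p : ℝ × ℝ,
      p.2 ^ 2 * (deriv V p.1) ^ 2 * iteratedDeriv 4 f (p.2 ^ 2 / 2 + V p.1) with hI4d
  -- e1 : I1 + I2 = 0
  have e1 : I1 + I2 = 0 := by
    have := aux_zero_x a V f hV hf hfa hVa (deriv V) hVd 2
    simp only [← pow_two] at this
    rw [integral_add hI1 hI2] at this
    exact this
  -- e2 : I1 + I3 = 0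
  have e2 : I1 + I3 = 0 := by
    have := aux_zero_xi a V f hV hf hfa hVa (deriv (deriv V)) hV'' 2
    rw [integral_add hI1 hI3] at this
    exact this
  -- e3 : I2 + I4 = 0
  have e3 : I2 + I4 = 0 := by
    have := aux_zero_xi a V f hV hf hfa hVa (fun x => (deriv V x) ^ 2) (hV'.pow 2) 3
    rw [integral_add hI2 hI4] at this
    exact this
  have hJ1 : Integrable (fun p : ℝ × ℝ =>
      -(1 / 4) * deriv (deriv V) p.1 * iteratedDeriv 2 f (p.2 ^ 2 / 2 + V p.1)) :=
    aux_int2 a V f hV hf hfa hVa _ (continuous_const.mul (hV''.comp continuous_fst)) 2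
  have hJ2 : Integrable (fun p : ℝ × ℝ =>
      (1 / 6) * (deriv V p.1) ^ 2 * iteratedDeriv 3 f (p.2 ^ 2 / 2 + V p.1)) :=
    aux_int2 a V f hV hf hfa hVa _ (continuous_const.mul ((hV'.comp continuous_fst).pow 2)) 3
  have hJ3 : Integrable (fun p : ℝ × ℝ =>
      (1 / 6) * p.2 ^ 2 * deriv (deriv V) p.1 * iteratedDeriv 3 f (p.2 ^ 2 / 2 + V p.1)) :=
    aux_int2 a V f hV hf hfa hVa _
      ((continuous_const.mul (continuous_snd.pow 2)).mul (hV''.comp continuous_fst)) 3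
  have hJ4 : Integrable (fun p : ℝ × ℝ =>
      (1 / 8) * p.2 ^ 2 * (deriv V p.1) ^ 2 * iteratedDeriv 4 f (p.2 ^ 2 / 2 + V p.1)) :=
    aux_int2 a V f hV hf hfa hVa _
      ((continuous_const.mul (continuous_snd.pow 2)).mul ((hV'.comp continuous_fst).pow 2)) 4
  have hJ12 : Integrable (fun p : ℝ × ℝ =>
      -(1 / 4) * deriv (deriv V) p.1 * iteratedDeriv 2 f (p.2 ^ 2 / 2 + V p.1)
        - (1 / 6) * (deriv V p.1) ^ 2 * iteratedDeriv 3 f (p.2 ^ 2 / 2 + V p.1)) :=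
    hJ1.sub hJ2
  have hJ123 : Integrable (fun p : ℝ × ℝ =>
      -(1 / 4) * deriv (deriv V) p.1 * iteratedDeriv 2 f (p.2 ^ 2 / 2 + V p.1)
        - (1 / 6) * (deriv V p.1) ^ 2 * iteratedDeriv 3 f (p.2 ^ 2 / 2 + V p.1)
        - (1 / 6) * p.2 ^ 2 * deriv (deriv V) p.1 * iteratedDeriv 3 f (p.2 ^ 2 / 2 + V p.1)) :=
    hJ12.sub hJ3
  rw [integral_sub hJ123 hJ4, integral_sub hJ12 hJ3, integral_sub hJ1 hJ2]
  have c1 : (∫ p : ℝ × ℝ, -(1 / 4) * deriv (deriv V) p.1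
      * iteratedDeriv 2 f (p.2 ^ 2 / 2 + V p.1)) = -(1 / 4) * I1 := by
    rw [hI1d, ← integral_const_mul]
    congr 1; funext p; ring
  have c2 : (∫ p : ℝ × ℝ, (1 / 6) * (deriv V p.1) ^ 2
      * iteratedDeriv 3 f (p.2 ^ 2 / 2 + V p.1)) = (1 / 6) * I2 := by
    rw [hI2d, ← integral_const_mul]
    congr 1; funext p; ring
  have c3 : (∫ p : ℝ × ℝ, (1 / 6) * p.2 ^ 2 * deriv (deriv V) p.1
      * iteratedDeriv 3 f (p.2 ^ 2 / 2 + V p.1)) = (1 / 6) * I3 := by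
    rw [hI3d, ← integral_const_mul]
    congr 1; funext p; ring
  have c4 : (∫ p : ℝ × ℝ, (1 / 8) * p.2 ^ 2 * (deriv V p.1) ^ 2
      * iteratedDeriv 4 f (p.2 ^ 2 / 2 + V p.1)) = (1 / 8) * I4 := by
    rw [hI4d, ← integral_const_mul]
    congr 1; funext p; ring
  rw [c1, c2, c3, c4]
  linarith
end
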